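/- For δ > 0, x₀ > 0, s > 0 and ν = δ/2 − 1, the function y ↦ (1/(2s)) (y/x₀)^{ν/2} exp(−(x₀+y)/(2s)) I_ν(√(x₀ y)/s) is a probability density on (0,∞). -/

import Mathlib

/-! Expanding `I_ν` in its power series shows that, with `c = 1/(2s)` and `λ = c x₀`, the density
at `y > 0` is `∑ₙ e^{-λ} λⁿ/n! · γ_{n+ν+1, c}(y)`, a Poisson(`λ`) mixture of gamma densities of
shape `n + ν + 1 > 0` and rate `c`. Integrating term by term, each gamma density contributes `1`
and the Poisson weights sum to `1`. -/

open Real MeasureTheory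

/-- The (real) modified Bessel function of the first kind. -/
noncomputable def besselI (ν : ℝ) (x : ℝ) : ℝ :=
  (x / 2) ^ ν * ∑' n : ℕ, (x ^ 2 / 4) ^ n / ((Nat.factorial n : ℝ) * Real.Gamma ((n : ℝ) + ν + 1))

open ProbabilityTheory Set
open scoped NNReal

lemma integral_tsum_mul_eq_one_of_integral_eq_one {α ι : Type*} [MeasurableSpace α]
    [Countable ι] {μ : Measure α} {p : ι → ℝ} {f : ι → α → ℝ} (hp_nonneg : ∀ i, 0 ≤ p i)
    (hp : HasSum p 1) (hf_nonneg : ∀ i, 0 ≤ᵐ[μ] f i) (hf_int : ∀ i, Integrable (f i) μ)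
    (hf_one : ∀ i, ∫ x, f i x ∂μ = 1) :
    ∫ x, ∑' i, p i * f i x ∂μ = 1 := by
  have h_int (i : ι) : ∫ x, p i * f i x ∂μ = p i := by
    rw [integral_const_mul, hf_one, mul_one]
  have h_norm (i : ι) : ∫ x, ‖p i * f i x‖ ∂μ = p i := by
    simp_rw [norm_mul, Real.norm_eq_abs, abs_of_nonneg (hp_nonneg i)]
    rw [integral_const_mul, integral_congr_ae ((hf_nonneg i).mono fun x hx => abs_of_nonneg hx),
      hf_one, mul_one]
  have h := hasSum_integral_of_summable_integral_norm (fun i => (hf_int i).const_mul (p i))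
    (by simpa only [h_norm] using hp.summable)
  simp only [h_int] at h
  exact (hp.unique h).symm

lemma integrable_gammaPDFReal {a r : ℝ} (ha : 0 < a) (hr : 0 < r) :
    Integrable (gammaPDFReal a r) := by
  refine ⟨(measurable_gammaPDFReal a r).aestronglyMeasurable, ?_⟩
  rw [hasFiniteIntegral_iff_ofReal (ae_of_all _ (gammaPDFReal_nonneg ha hr))]
  exact (lintegral_gammaPDF_eq_one ha hr).trans_lt ENNReal.one_lt_top

lemma setIntegral_Ioi_gammaPDFReal {a r : ℝ} (ha : 0 < a) (hr : 0 < r) :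
    ∫ x in Ioi 0, gammaPDFReal a r x = 1 := by
  have h_whole : ∫ x, gammaPDFReal a r x = 1 := by
    rw [integral_eq_lintegral_of_nonneg_ae (ae_of_all _ (gammaPDFReal_nonneg ha hr))
      (measurable_gammaPDFReal a r).aestronglyMeasurable]
    exact congrArg ENNReal.toReal (lintegral_gammaPDF_eq_one ha hr)
  rw [← integral_Ici_eq_integral_Ioi, setIntegral_eq_integral_of_forall_compl_eq_zero, h_whole]
  intro x hx
  simp [gammaPDFReal, show ¬ 0 ≤ x from hx]

lemma besselI_two_mul_sqrt (ν : ℝ) {w : ℝ} (hw : 0 ≤ w) :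
    besselI ν (2 * √w) =
      w ^ (ν / 2) * ∑' n : ℕ, w ^ n / ((Nat.factorial n : ℝ) * Gamma ((n : ℝ) + ν + 1)) := by
  rw [besselI, mul_div_cancel_left₀ _ two_ne_zero, mul_pow, sq_sqrt hw,
    show (2 : ℝ) ^ 2 * w / 4 = w by ring, sqrt_eq_rpow, ← rpow_mul hw, one_div_mul_eq_div]

lemma poisson_weight_mul_gammaPDFReal {ν c x₀ y : ℝ} {r : ℝ≥0} (hc : 0 < c)
    (hr : (r : ℝ) = c * x₀) (hy : 0 < y) (n : ℕ) :
    exp (-r) * r ^ n / (Nat.factorial n) * gammaPDFReal (n + ν + 1) c y =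
      c * (c * y) ^ ν * exp (-(c * x₀)) * exp (-(c * y)) *
        ((c ^ 2 * x₀ * y) ^ n / ((Nat.factorial n : ℝ) * Gamma ((n : ℝ) + ν + 1))) := by
  have hc_pow : c ^ ((n : ℝ) + ν + 1) = c ^ n * c ^ ν * c := by
    rw [rpow_add hc, rpow_add hc, rpow_natCast, rpow_one]
  have hy_pow : y ^ ((n : ℝ) + ν + 1 - 1) = y ^ n * y ^ ν := by
    rw [add_sub_cancel_right, rpow_add hy, rpow_natCast]
  rw [gammaPDFReal, if_pos hy.le, hr, hc_pow, hy_pow, mul_rpow hc.le hy.le]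
  ring

lemma besq_density_eq_poisson_mixture_gammaPDFReal {ν x₀ s y : ℝ} {r : ℝ≥0} (hx₀ : 0 < x₀)
    (hs : 0 < s) (hr : (r : ℝ) = x₀ / (2 * s)) (hy : 0 < y) :
    (1 / (2 * s)) * (y / x₀) ^ (ν / 2) * exp (-(x₀ + y) / (2 * s)) * besselI ν (√(x₀ * y) / s) =
      ∑' n : ℕ,
        exp (-r) * r ^ n / (Nat.factorial n) * gammaPDFReal (n + ν + 1) (1 / (2 * s)) y := by
  set c := 1 / (2 * s) with hc_def
  have hc : 0 < c := by positivity
  have h_arg : √(x₀ * y) / s = 2 * √(c ^ 2 * x₀ * y) := by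
    rw [mul_assoc, sqrt_mul (sq_nonneg c), sqrt_sq hc.le, hc_def]
    field_simp
  have h_exp : exp (-(x₀ + y) / (2 * s)) = exp (-(c * x₀)) * exp (-(c * y)) := by
    rw [← exp_add, hc_def]
    congr 1
    field_simp
    ring
  have h_pow : (y / x₀) ^ (ν / 2) * (c ^ 2 * x₀ * y) ^ (ν / 2) = (c * y) ^ ν := by
    rw [← mul_rpow (by positivity) (by positivity),
      show y / x₀ * (c ^ 2 * x₀ * y) = (c * y) ^ (2 : ℝ) by rw [rpow_two]; field_simp,
      ← rpow_mul (by positivity), mul_div_cancel₀ _ two_ne_zero]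
  simp_rw [poisson_weight_mul_gammaPDFReal hc (by rw [hr]; ring) hy, tsum_mul_left]
  rw [h_arg, besselI_two_mul_sqrt ν (by positivity), h_exp, ← h_pow]
  ring

/-- The transition density of the squared Bessel process of dimension `δ` started at `x₀ > 0`
is a probability density on `(0,∞)`. -/
theorem besq_density_integral (δ ν x₀ s : ℝ) (hδ : 0 < δ) (hν : ν = δ / 2 - 1)
    (hx₀ : 0 < x₀) (hs : 0 < s) :
    ∫ y in Set.Ioi (0 : ℝ),
      (1 / (2 * s)) * (y / x₀) ^ (ν / 2) * Real.exp (-(x₀ + y) / (2 * s)) *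
        besselI ν (Real.sqrt (x₀ * y) / s) = 1 := by
  have hshape (n : ℕ) : 0 < (n : ℝ) + ν + 1 := by
    have := n.cast_nonneg (α := ℝ)
    rw [hν]
    linarith
  have hrate : 0 < 1 / (2 * s) := by positivity
  set r : ℝ≥0 := (x₀ / (2 * s)).toNNReal
  have hr : (r : ℝ) = x₀ / (2 * s) := Real.coe_toNNReal _ (by positivity)
  rw [setIntegral_congr_fun measurableSet_Ioi fun y hy =>
    besq_density_eq_poisson_mixture_gammaPDFReal hx₀ hs hr hy]
  exact integral_tsum_mul_eq_one_of_integral_eq_one (fun _ => by positivity)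
    (hasSum_one_poissonMeasure r)
    (fun n => ae_of_all _ (gammaPDFReal_nonneg (hshape n) hrate))
    (fun n => (integrable_gammaPDFReal (hshape n) hrate).restrict)
    (fun n => setIntegral_Ioi_gammaPDFReal (hshape n) hrate)
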